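/- If a monogenic monoid C_{k,ℓ} = ⟨a | a^k = a^ℓ⟩ with 0 ≤ ℓ < k is not aperiodic (i.e. k > ℓ+1), then C_{k,ℓ} does not embed as a subsemigroup into the monoid of n×n upper triangular tropical integer matrices for any n. -/

import Mathlib

/-!
The image `A` of the generator `a` is upper triangular, so the diagonal of `A ^ m` is the
`m`-th power of the diagonal of `A`, and `a ^ k = a ^ ℓ` forces every diagonal entry to be a
tropical torsion element, i.e. `-∞` or `0`. Over an idempotent semiring, an upper triangular
`n × n` matrix with such a diagonal satisfies `A ^ (n + 2) = A ^ (n + 1)` (induction on `n`,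
peeling off the first row). An injective semigroup map would then give
`a ^ (n + 2) = a ^ (n + 1)` in `C_{k,ℓ}`, which is impossible: `a ↦ 1` maps `C_{k,ℓ}` onto
`ℤ/(k - ℓ)`, and `k - ℓ ≥ 2`.
-/

/-- The max-plus tropical semiring `ℤ ∪ {-∞}`: tropical addition is `max`,
tropical multiplication is `+`, and `(0 : T)` is the tropical zero `-∞`. -/
abbrev T : Type := Tropical (WithTop ℤᵒᵈ)

/-- The element of the tropical semiring corresponding to the integer `k`. -/
def t (k : ℤ) : T := Tropical.trop ((OrderDual.toDual k : ℤᵒᵈ) : WithTop ℤᵒᵈ)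

/-- The defining relation of the monogenic monoid `C_{k,ℓ} = ⟨a | a^k = a^ℓ⟩`. -/
def cycRel (k l : ℕ) : FreeMonoid Unit → FreeMonoid Unit → Prop :=
  fun u v => u = FreeMonoid.of () ^ k ∧ v = FreeMonoid.of () ^ l

namespace Matrix

variable {R : Type*} [Semiring R]

section LinearOrder

variable {m : Type*} [Fintype m] [LinearOrder m] {A B : Matrix m m R}

theorem IsUpperTriangular.mul_apply_self (hA : A.IsUpperTriangular)
    (hB : B.IsUpperTriangular) (i : m) : (A * B) i i = A i i * B i i := by
  refine (mul_apply ..).trans (Finset.sum_eq_single i (fun r _ hri => ?_) (by simp))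
  rcases hri.lt_or_gt with hr | hr
  · rw [hA hr, zero_mul]
  · rw [hB hr, mul_zero]

theorem IsUpperTriangular.pow_apply_self [DecidableEq m] (hA : A.IsUpperTriangular) (k : ℕ)
    (i : m) : (A ^ k) i i = A i i ^ k := by
  induction k with
  | zero => simp
  | succ k ih => rw [pow_succ, IsUpperTriangular.mul_apply_self (hA.pow k) hA, ih, pow_succ]

end LinearOrder

section Fin

variable {n : ℕ} {A : Matrix (Fin (n + 1)) (Fin (n + 1)) R}

theorem IsUpperTriangular.submatrix_succ (hA : A.IsUpperTriangular) :
    (A.submatrix Fin.succ Fin.succ).IsUpperTriangular :=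
  fun _ _ hij => hA (Fin.succ_lt_succ_iff.2 hij)

theorem IsUpperTriangular.submatrix_succ_mul (hA : A.IsUpperTriangular)
    (B : Matrix (Fin (n + 1)) (Fin (n + 1)) R) :
    (A * B).submatrix Fin.succ Fin.succ =
      A.submatrix Fin.succ Fin.succ * B.submatrix Fin.succ Fin.succ := by
  ext i j
  have h0 : A i.succ 0 = 0 := hA (Fin.succ_pos i)
  rw [submatrix_apply, mul_apply, Fin.sum_univ_succ, h0, zero_mul, zero_add]
  rfl

theorem IsUpperTriangular.submatrix_succ_pow (hA : A.IsUpperTriangular) (k : ℕ) :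
    (A ^ k).submatrix Fin.succ Fin.succ = A.submatrix Fin.succ Fin.succ ^ k := by
  induction k with
  | zero => simp [submatrix_one _ (Fin.succ_injective n)]
  | succ k ih => rw [pow_succ', hA.submatrix_succ_mul, ih, pow_succ']

theorem IsUpperTriangular.pow_succ_apply_zero_succ (hA : A.IsUpperTriangular) (k : ℕ)
    (j : Fin n) :
    (A ^ (k + 1)) 0 j.succ =
      A 0 0 * (A ^ k) 0 j.succ + ∑ r, A 0 r.succ * (A.submatrix Fin.succ Fin.succ ^ k) r j := by
  rw [pow_succ', mul_apply, Fin.sum_univ_succ, ← hA.submatrix_succ_pow]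
  rfl

end Fin

theorem IsUpperTriangular.pow_succ_eq_pow (hR : ∀ a : R, a + a = a) {n : ℕ}
    {A : Matrix (Fin n) (Fin n) R} (hA : A.IsUpperTriangular)
    (hdiag : ∀ i, A i i = 0 ∨ A i i = 1) {m : ℕ} (hm : n ≤ m) : A ^ (m + 1) = A ^ m := by
  induction n generalizing m with
  | zero => exact Subsingleton.elim _ _
  | succ n ih =>
    have hB (k : ℕ) (hk : n ≤ k) :
        A.submatrix Fin.succ Fin.succ ^ (k + 1) = A.submatrix Fin.succ Fin.succ ^ k :=
      ih hA.submatrix_succ (fun i => hdiag i.succ) hk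
    obtain ⟨m, rfl⟩ : ∃ m', m = m' + 1 := ⟨m - 1, by omega⟩
    ext i j
    cases i using Fin.cases with
    | zero =>
      cases j using Fin.cases with
      | zero =>
        rw [hA.pow_apply_self, hA.pow_apply_self]
        rcases hdiag 0 with h | h <;> simp [h]
      | succ j =>
        -- `s ↦ d * s + c` with `d ∈ {0, 1}` is idempotent once `c` has stabilised
        rw [hA.pow_succ_apply_zero_succ, hA.pow_succ_apply_zero_succ, hB m (by omega)]
        rcases hdiag 0 with h | h <;> simp [h, add_assoc, hR]
    | succ i =>
      cases j using Fin.cases with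
      | zero => exact (hA.pow _ (Fin.succ_pos i)).trans (hA.pow _ (Fin.succ_pos i)).symm
      | succ j =>
        show ((A ^ (m + 1 + 1)).submatrix Fin.succ Fin.succ) i j =
          ((A ^ (m + 1)).submatrix Fin.succ Fin.succ) i j
        rw [hA.submatrix_succ_pow, hA.submatrix_succ_pow, hB (m + 1) (by omega)]

end Matrix

theorem Tropical.eq_zero_or_eq_one_of_pow_eq_pow {α : Type*} [AddCancelCommMonoid α]
    [IsAddTorsionFree α] {d : Tropical (WithTop α)} {p q : ℕ} (hpq : p ≠ q)
    (h : d ^ p = d ^ q) : d = 0 ∨ d = 1 := by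
  induction d using Tropical.tropRec with | h u => ?_
  induction u using WithTop.recTopCoe with
  | top => exact Or.inl rfl
  | coe a =>
    refine Or.inr (congrArg (fun b : α => trop (b : WithTop α)) ?_)
    have ha : p • a = q • a := by
      apply WithTop.coe_injective
      simpa [← WithTop.coe_nsmul] using congrArg untrop h
    by_contra hne
    exact hpq (injective_nsmul_iff_not_isOfFinAddOrder.2
      (fun hfin => hne hfin.eq_zero') ha)

theorem MulHom.map_pow_succ {M N : Type*} [Monoid M] [Monoid N] (f : M →ₙ* N) (x : M)
    (k : ℕ) : f (x ^ (k + 1)) = f x ^ (k + 1) := by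
  induction k with
  | zero => simp
  | succ k ih => rw [pow_succ, map_mul, ih, ← pow_succ]

section Monogenic

variable {k l : ℕ}

theorem cycRel_of_pow_eq_pow :
    PresentedMonoid.of (cycRel k l) () ^ k = PresentedMonoid.of (cycRel k l) () ^ l := by
  simp only [PresentedMonoid.of, ← map_pow]
  exact PresentedMonoid.mk_eq_mk_of_rel ⟨rfl, rfl⟩

def cycRelToZMod (hlk : l ≤ k) :
    PresentedMonoid (cycRel k l) →* Multiplicative (ZMod (k - l)) :=
  PresentedMonoid.lift (fun _ => Multiplicative.ofAdd 1) <| by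
    rintro _ _ ⟨rfl, rfl⟩
    simp only [map_pow, FreeMonoid.lift_eval_of, ← ofAdd_nsmul, nsmul_one]
    exact congrArg _ <|
      (ZMod.natCast_eq_natCast_iff _ _ _).2 ((Nat.modEq_iff_dvd' hlk).2 dvd_rfl).symm

theorem cycRelToZMod_of_pow (hlk : l ≤ k) (m : ℕ) :
    cycRelToZMod hlk (PresentedMonoid.of (cycRel k l) () ^ m) =
      Multiplicative.ofAdd (m : ZMod (k - l)) := by
  rw [map_pow, cycRelToZMod, PresentedMonoid.lift_of, ← ofAdd_nsmul, nsmul_one]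

theorem cycRel_of_pow_succ_ne_pow (h : l + 1 < k) (m : ℕ) :
    PresentedMonoid.of (cycRel k l) () ^ (m + 1) ≠ PresentedMonoid.of (cycRel k l) () ^ m := by
  intro heq
  have hlk : l ≤ k := by omega
  have hone := congrArg (cycRelToZMod hlk) heq
  rw [cycRelToZMod_of_pow, cycRelToZMod_of_pow, Multiplicative.ofAdd.injective.eq_iff,
    Nat.cast_succ, add_eq_left] at hone
  exact (by omega : k - l ≠ 1) (ZMod.one_eq_zero_iff.1 hone)

end Monogenic

/-- If the finite monogenic monoid `C_{k,ℓ} = ⟨a | a^k = a^ℓ⟩` (with `ℓ < k`) is not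
aperiodic, i.e. `k > ℓ + 1`, then it does not embed as a subsemigroup into the
monoid of `n × n` upper triangular tropical matrices for any `n`. -/
theorem non_aperiodic_monogenic_not_UT_tropical (k l : ℕ) (h : l + 1 < k) :
    ¬ ∃ (n : ℕ) (f : PresentedMonoid (cycRel k l) →ₙ* Matrix (Fin n) (Fin n) T),
        Function.Injective f ∧
          ∀ x : PresentedMonoid (cycRel k l), ∀ i j : Fin n, j < i → f x i j = 0 := by
  rintro ⟨n, f, hinj, htri⟩
  set a := PresentedMonoid.of (cycRel k l) ()
  have hA : (f a).IsUpperTriangular := fun i j => htri a i j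
  have hrel : f a ^ (k + 1) = f a ^ (l + 1) := by
    rw [← f.map_pow_succ, ← f.map_pow_succ, pow_succ, pow_succ, cycRel_of_pow_eq_pow]
  have hdiag (i : Fin n) : f a i i = 0 ∨ f a i i = 1 :=
    Tropical.eq_zero_or_eq_one_of_pow_eq_pow (by omega : k + 1 ≠ l + 1) <| by
      rw [← hA.pow_apply_self, ← hA.pow_apply_self, hrel]
  have hstab : f a ^ (n + 1 + 1) = f a ^ (n + 1) :=
    hA.pow_succ_eq_pow Tropical.add_self hdiag n.le_succ
  exact cycRel_of_pow_succ_ne_pow h (n + 1) (hinj (by rw [f.map_pow_succ, f.map_pow_succ, hstab]))
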